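/- Let (k_i)_{i∈I} and (ℓ_i)_{i∈I} be vectors of natural numbers with k_i ≥ ℓ_i > 1 for every student i. For every problem (P,≻,q), the matching GS(P^ℓ̄, ≻, q), where each student i reports the truncation P_i^{ℓ_i}, has at least as many blocking students under (P,≻,q) as the matching GS(P^k̄, ≻, q), where each student i reports the truncation P_i^{k_i}. -/

import Mathlib

/-!
School choice framework following Bonkoungou–Nesterov,
"Reforms meet fairness concerns in school and college admissions".

Students `I` and schools `S` are finite types with `|I| > |S|`.
A strict preference relation of a student over `S ∪ {∅}` is represented by a list
of `Option S` containing every element exactly once (earlier = more preferred);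
`none` is the outside option.  A strict priority order of a school is a list of
`I` containing every student exactly once (earlier = higher priority).
-/

namespace SchoolChoice

variable {I S : Type*} [Fintype I] [DecidableEq I] [Fintype S] [DecidableEq S]

/-- `p` is a strict preference relation on `S ∪ {∅}`: a ranking list containing every
element of `Option S` exactly once. -/
def ValidPref (p : List (Option S)) : Prop := p.Nodup ∧ ∀ x : Option S, x ∈ p

/-- `pr` is a strict priority order: a ranking list containing every student exactly once. -/
def ValidPrio (pr : List I) : Prop := pr.Nodup ∧ ∀ i : I, i ∈ pr

/-- `a` is strictly preferred to `b` under the preference relation `p`. -/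
def prefLt (p : List (Option S)) (a b : Option S) : Prop := p.idxOf a < p.idxOf b

/-- `i` has strictly higher priority than `j` under the priority order `pr`. -/
def prioLt (pr : List I) (i j : I) : Prop := pr.idxOf i < pr.idxOf j

instance (p : List (Option S)) (a b : Option S) : Decidable (prefLt p a b) :=
  inferInstanceAs (Decidable (_ < _))

instance (pr : List I) (i j : I) : Decidable (prioLt pr i j) :=
  inferInstanceAs (Decidable (_ < _))

/-- The acceptable schools of `p` (those preferred to the outside option), in preference
order. -/
def acceptables (p : List (Option S)) : List S := (p.takeWhile Option.isSome).filterMap id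

/-- The truncation of `p` after its `k`-th acceptable school: the preference relation
listing, in the same order, only the `min k _` most-preferred acceptable schools of `p`,
all other schools being unacceptable (kept below `none` in their original order). -/
def truncate (p : List (Option S)) (k : ℕ) : List (Option S) :=
  ((acceptables p).take k).map some ++
    none :: p.filter (fun x => decide (x ≠ none ∧ x ∉ ((acceptables p).take k).map some))

/-- `μ` is a matching: it respects the capacities `q`. -/
def IsMatching (q : S → ℕ) (μ : I → Option S) : Prop :=
  ∀ s : S, (Finset.univ.filter (fun i => μ i = some s)).card ≤ q s

/-- The pair `(i, s)` blocks `μ` under the problem `(P, prio, q)`. -/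
def Blocks (P : I → List (Option S)) (prio : S → List I) (q : S → ℕ)
    (μ : I → Option S) (i : I) (s : S) : Prop :=
  prefLt (P i) (some s) (μ i) ∧
    ((Finset.univ.filter (fun j => μ j = some s)).card < q s ∨
      ∃ j : I, μ j = some s ∧ prioLt (prio s) i j)

/-- `i` is a blocking student for `μ` under `(P, prio, q)`. -/
def BlockingStudent (P : I → List (Option S)) (prio : S → List I) (q : S → ℕ)
    (μ : I → Option S) (i : I) : Prop :=
  ∃ s : S, Blocks P prio q μ i s

/-- `μ` is individually rational under `P`. -/
def IndividuallyRational (P : I → List (Option S)) (μ : I → Option S) : Prop :=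
  ∀ i : I, ¬ prefLt (P i) none (μ i)

/-- `μ` is stable at `(P, prio, q)`. -/
def IsStable (P : I → List (Option S)) (prio : S → List I) (q : S → ℕ)
    (μ : I → Option S) : Prop :=
  IndividuallyRational P μ ∧ ∀ i : I, ¬ BlockingStudent P prio q μ i

/-- The number of blocking students for `μ` under `(P, prio, q)`. -/
noncomputable def numBlocking (P : I → List (Option S)) (prio : S → List I) (q : S → ℕ)
    (μ : I → Option S) : ℕ :=
  {i : I | BlockingStudent P prio q μ i}.ncard

/-! ### The Gale–Shapley student-proposing deferred acceptance mechanism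

The state `σ : I → ℕ` records, for each student, how many of her acceptable schools
have already rejected her; she currently applies to the `σ i`-th school on her list
(if any).  At each round every school tentatively keeps the `q s` highest-priority
students among its current applicants and rejects the rest, who move on. -/

/-- The school student `i` currently applies to. -/
def daTarget (P : I → List (Option S)) (σ : I → ℕ) (i : I) : Option S :=
  (acceptables (P i))[σ i]?

/-- The students tentatively held by school `s`: the `q s` highest-priority current
applicants. -/
def daHeld (P : I → List (Option S)) (prio : S → List I) (q : S → ℕ)
    (σ : I → ℕ) (s : S) : List I :=
  ((prio s).filter (fun i => decide (daTarget P σ i = some s))).take (q s)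

/-- One round of deferred acceptance: every rejected student moves to her next choice. -/
def daStep (P : I → List (Option S)) (prio : S → List I) (q : S → ℕ)
    (σ : I → ℕ) : I → ℕ := fun i =>
  match daTarget P σ i with
  | none => σ i
  | some s => if i ∈ daHeld P prio q σ s then σ i else σ i + 1

/-- The Gale–Shapley (student-proposing deferred acceptance) mechanism.  Iterating the
round map `|I| * |S| + 1` times is guaranteed to reach the terminal state. -/
def GS (P : I → List (Option S)) (prio : S → List I) (q : S → ℕ) : I → Option S :=
  fun i =>
    let σ := (daStep P prio q)^[Fintype.card I * Fintype.card S + 1] (fun _ => 0)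
    match daTarget P σ i with
    | none => none
    | some s => if i ∈ daHeld P prio q σ s then some s else none

/-- The constrained Gale–Shapley mechanism `GS^k`. -/
def GSk (k : ℕ) (P : I → List (Option S)) (prio : S → List I) (q : S → ℕ) : I → Option S :=
  GS (fun i => truncate (P i) k) prio q

/-! ### The Boston (immediate acceptance) mechanism -/

/-- Round `t` of the Boston mechanism: each not-yet-accepted student applies to her
`t`-th ranked acceptable school (0-indexed), and each school permanently accepts, up to
its remaining capacity, its highest-priority new applicants. -/
def bostonRound (P : I → List (Option S)) (prio : S → List I) (q : S → ℕ)
    (μ : I → Option S) (t : ℕ) : I → Option S := fun i =>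
  match μ i with
  | some s => some s
  | none =>
    match (acceptables (P i))[t]? with
    | none => none
    | some s =>
      if i ∈ ((prio s).filter
            (fun j => decide (μ j = none ∧ (acceptables (P j))[t]? = some s))).take
          (q s - (Finset.univ.filter (fun j => μ j = some s)).card)
      then some s else none

/-- The Boston (immediate acceptance) mechanism. -/
def Boston (P : I → List (Option S)) (prio : S → List I) (q : S → ℕ) : I → Option S :=
  (List.range (Fintype.card S)).foldl (bostonRound P prio q) (fun _ => none)

/-- The constrained Boston mechanism `β^k`. -/
def Bostonk (k : ℕ) (P : I → List (Option S)) (prio : S → List I) (q : S → ℕ) :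
    I → Option S :=
  Boston (fun i => truncate (P i) k) prio q

/-! ### The first-preference-first mechanism -/

/-- The adjusted priority profile: each first-preference-first school (member of `fpf`)
ranks students first by the rank they assign to it under `P` (counting the ranking of the
outside option as well), ties broken by the original priority; equal-preference schools
keep their original priority. -/
def fpfPrio (fpf : Finset S) (P : I → List (Option S)) (prio : S → List I) : S → List I :=
  fun s =>
    if s ∈ fpf then
      (List.range (Fintype.card S + 1)).flatMap
        (fun r => (prio s).filter (fun i => decide ((P i).idxOf (some s) = r)))
    else prio s

/-- The first-preference-first mechanism with set `fpf` of first-preference-first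
schools: Gale–Shapley run on the adjusted priorities. -/
def FPF (fpf : Finset S) (P : I → List (Option S)) (prio : S → List I) (q : S → ℕ) :
    I → Option S :=
  GS P (fpfPrio fpf P prio) q

/-- The constrained first-preference-first mechanism `FPF^k`. -/
def FPFk (fpf : Finset S) (k : ℕ) (P : I → List (Option S)) (prio : S → List I)
    (q : S → ℕ) : I → Option S :=
  FPF fpf (fun i => truncate (P i) k) prio q

/-! ### Manipulation and equilibrium notions -/

/-- Student `i` is a manipulating student of the mechanism `φ` (with priorities and
capacities fixed) at the true profile `P`. -/
def ManipulatingStudent (φ : (I → List (Option S)) → I → Option S)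
    (P : I → List (Option S)) (i : I) : Prop :=
  ∃ Q : List (Option S), ValidPref Q ∧
    prefLt (P i) (φ (Function.update P i Q) i) (φ P i)

/-- The mechanism `φ` is not manipulable at `P`. -/
def NotManipulable (φ : (I → List (Option S)) → I → Option S)
    (P : I → List (Option S)) : Prop :=
  ∀ i : I, ¬ ManipulatingStudent φ P i

/-- `P'` is a Nash equilibrium of the game `(φ, P)` in which the sophisticated students
are the members of `M` (who may misreport, and best respond) and all other (sincere)
students report truthfully. -/
def NashEq (φ : (I → List (Option S)) → I → Option S) (P : I → List (Option S))
    (M : Finset I) (P' : I → List (Option S)) : Prop :=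
  (∀ i, ValidPref (P' i)) ∧ (∀ i ∉ M, P' i = P i) ∧
    ∀ i ∈ M, ∀ Q : List (Option S), ValidPref Q →
      ¬ prefLt (P i) (φ (Function.update P' i Q) i) (φ P' i)

/-! ### Semi-sophisticated students -/

/-- Student `i` is guaranteed her first choice `s`: `s` is her most-preferred acceptable
school and `i` is among the `q s` highest-priority students at `s`. -/
def GuaranteedFirstChoice (P : I → List (Option S)) (prio : S → List I) (q : S → ℕ)
    (i : I) (s : S) : Prop :=
  (acceptables (P i)).head? = some s ∧ (prio s).idxOf i < q s

instance (P : I → List (Option S)) (prio : S → List I) (q : S → ℕ) (i : I) (s : S) :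
    Decidable (GuaranteedFirstChoice P prio q i s) :=
  inferInstanceAs (Decidable (_ ∧ _))

/-- School `s` is competitive: at least `q s` students are guaranteed their first
choice `s`. -/
def Competitive (P : I → List (Option S)) (prio : S → List I) (q : S → ℕ) (s : S) : Prop :=
  q s ≤ (Finset.univ.filter (fun i => GuaranteedFirstChoice P prio q i s)).card

instance (P : I → List (Option S)) (prio : S → List I) (q : S → ℕ) (s : S) :
    Decidable (Competitive P prio q s) :=
  inferInstanceAs (Decidable (_ ≤ _))

/-- `P'` is a Nash equilibrium of the game `(GS^ℓ, P)` with semi-sophisticated students: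
every student guaranteed her first choice reports truthfully; every other student reports
truthfully if she has at most `ℓ` acceptable schools or all her acceptable schools are
competitive, and otherwise lists as acceptable, in the order given by her true preference,
only her acceptable schools that are not competitive. -/
def SemiSophProfile (ℓ : ℕ) (P : I → List (Option S)) (prio : S → List I) (q : S → ℕ)
    (P' : I → List (Option S)) : Prop :=
  ∀ i : I,
    ((∃ s : S, GuaranteedFirstChoice P prio q i s) → P' i = P i) ∧
    (¬ (∃ s : S, GuaranteedFirstChoice P prio q i s) →
      (((acceptables (P i)).length ≤ ℓ ∨ ∀ s ∈ acceptables (P i), Competitive P prio q s) →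
          P' i = P i) ∧
      (¬ ((acceptables (P i)).length ≤ ℓ ∨
            ∀ s ∈ acceptables (P i), Competitive P prio q s) →
          acceptables (P' i) =
            (acceptables (P i)).filter (fun s => decide (¬ Competitive P prio q s))))

/-!
Deferred acceptance is analysed through asynchronous runs, in which one rejected student at a
time moves to her next school. Along any run no student passes the school she gets in a stable
matching, so every terminal state reached from the start encodes the student-optimal stable
matching, and `GS` may be computed along whichever run is convenient.

Under truncated preferences only unmatched students block, since a school a matched student
prefers lies within her list. Lengthening the list of one student `i₀` by one school `s₀` either
leaves the outcome unchanged, or `i₀` was unmatched and has a claim to `s₀`. In the latter case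
run the old lists to the end, let `i₀` apply to `s₀` and resume: seats only fill up and claims
only weaken, so a blocking student of the new matching who was unmatched before was already
blocking, and the students newly unmatched are no more numerous than the newly matched ones,
of whom there is at most `i₀`, a blocking student who no longer blocks. The theorem follows by
lengthening the truncations one school at a time.
-/

section Lists

variable {α : Type*} {X Y : List α} {a x : α} {n : ℕ}

theorem take_append_cons_of_not_mem_take (h : a ∉ (X ++ a :: Y).take n) :
    (X ++ a :: Y).take n = (X ++ Y).take n := by
  have hn : n ≤ X.length := by
    by_contra hlt
    obtain ⟨m, hm⟩ : ∃ m, n - X.length = m + 1 := ⟨n - X.length - 1, by omega⟩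
    simp [List.take_append, hm] at h
  rw [List.take_append_of_le_length hn, List.take_append_of_le_length hn]

theorem mem_take_of_mem_take_append_cons (hx : x ∈ (X ++ a :: Y).take n) (hxa : x ≠ a) :
    x ∈ (X ++ Y).take n := by
  rw [List.take_append] at hx ⊢
  refine List.mem_append.2 ((List.mem_append.1 hx).imp id fun hY => ?_)
  obtain ⟨m, hm⟩ : ∃ m, n - X.length = m + 1 :=
    ⟨n - X.length - 1, by have := List.length_pos_of_mem hY; rw [List.length_take] at this; omega⟩
  rw [hm, List.take_succ_cons, List.mem_cons] at hY
  rw [hm]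
  exact List.take_subset_take_left _ (Nat.le_succ m) (hY.resolve_left hxa)

theorem length_take_le_length_take_append_cons :
    ((X ++ Y).take n).length ≤ ((X ++ a :: Y).take n).length := by
  simp only [List.length_take, List.length_append, List.length_cons]
  omega

theorem exists_rel_of_mem_take_append_cons {r : α → α → Prop} (hr : (X ++ a :: Y).Pairwise r)
    (haX : a ∉ X) (ha : a ∈ (X ++ a :: Y).take n) :
    ((X ++ Y).take n).length < n ∨ ∃ y ∈ (X ++ Y).take n, r a y := by
  have hXn : X.length < n := by
    by_contra hle
    rw [List.take_append_of_le_length (by omega)] at ha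
    exact haX (List.mem_of_mem_take ha)
  by_cases hY : Y.take (n - X.length) = []
  · obtain rfl : Y = [] := by simpa [List.take_eq_nil_iff, show n - X.length ≠ 0 by omega] using hY
    simpa using Or.inl hXn
  · obtain ⟨y, hy⟩ := List.exists_mem_of_ne_nil _ hY
    refine Or.inr ⟨y, by rw [List.take_append]; exact List.mem_append_right _ hy, ?_⟩
    exact List.rel_of_pairwise_cons (List.pairwise_append.1 hr).2.1 (List.mem_of_mem_take hy)

theorem length_take_eq_and_rel_of_not_mem_take {L : List α} {r : α → α → Prop}
    (hr : L.Pairwise r) (hx : x ∈ L) (hnx : x ∉ L.take n) :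
    (L.take n).length = n ∧ ∀ y ∈ L.take n, r y x := by
  have hn : n ≤ L.length := by
    by_contra hlt
    exact hnx (by rwa [List.take_of_length_le (by omega)])
  refine ⟨by simpa using hn, fun y hy => hr.rel_of_mem_take_of_mem_drop hy ?_⟩
  rw [← List.take_append_drop n L] at hx
  exact (List.mem_append.1 hx).resolve_left hnx

theorem exists_filter_eq_append_and_filter_eq_append_cons {l : List α}
    (hl : l.Nodup) {p p' : α → Bool} (hpp' : ∀ b ≠ a, p b = p' b) (hpa : p a = false)
    (hp'a : p' a = true) (hal : a ∈ l) :
    ∃ X Y, a ∉ X ∧ a ∉ Y ∧ l.filter p = X ++ Y ∧ l.filter p' = X ++ a :: Y := by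
  obtain ⟨l₁, l₂, rfl⟩ := List.append_of_mem hal
  have h₁ : a ∉ l₁ := fun h => List.disjoint_of_nodup_append hl h (List.mem_cons_self ..)
  have h₂ : a ∉ l₂ := (List.nodup_cons.1 (List.Nodup.of_append_right hl)).1
  refine ⟨l₁.filter p, l₂.filter p, fun h => h₁ (List.mem_of_mem_filter h),
    fun h => h₂ (List.mem_of_mem_filter h), by simp [List.filter_append, hpa], ?_⟩
  rw [List.filter_append, List.filter_cons, hp'a, if_pos rfl,
    List.filter_congr fun b hb => hpp' b (fun e => h₁ (e ▸ hb)),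
    List.filter_congr (l := l₂) fun b hb => hpp' b (fun e => h₂ (e ▸ hb))]

theorem _root_.List.Nodup.pairwise_idxOf_lt [DecidableEq α] {l : List α} (h : l.Nodup) :
    l.Pairwise fun a b => l.idxOf a < l.idxOf b := by
  rw [List.pairwise_iff_getElem]
  intro i j hi hj hij
  rwa [h.idxOf_getElem, h.idxOf_getElem]

end Lists

/-- The elements of `U' \ U` available to `B'` are no more numerous than those of `U \ U'`,
which lie in `B` but not in `B'`. -/
theorem ncard_le_ncard_of_subset_of_sdiff_subset {α : Type*} [Finite α] {B B' U U' : Set α}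
    (hB' : B' ⊆ U') (hstay : B' ∩ U ⊆ B) (hleave : U \ U' ⊆ B) (hU : U'.ncard ≤ U.ncard) :
    B'.ncard ≤ B.ncard := by
  have hsplit : B'.ncard ≤ (B ∩ U').ncard + (U' \ U).ncard := by
    refine (Set.ncard_le_ncard fun x hx => ?_).trans (Set.ncard_union_le _ _)
    by_cases hxU : x ∈ U
    · exact Or.inl ⟨hstay ⟨hx, hxU⟩, hB' hx⟩
    · exact Or.inr ⟨hB' hx, hxU⟩
  have hswap : (U' \ U).ncard ≤ (U \ U').ncard := by
    have h₁ := Set.ncard_inter_add_ncard_sdiff_eq_ncard U' U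
    have h₂ := Set.ncard_inter_add_ncard_sdiff_eq_ncard U U'
    rw [Set.inter_comm] at h₂
    omega
  have hdisj : (B ∩ U').ncard + (U \ U').ncard ≤ B.ncard := by
    rw [← Set.ncard_union_eq (Set.disjoint_of_subset_left Set.inter_subset_right
      Set.disjoint_sdiff_right)]
    exact Set.ncard_le_ncard (Set.union_subset Set.inter_subset_left hleave)
  omega

theorem card_filter_eq_none_add_sum {I S : Type*} [Fintype I] [Fintype S] [DecidableEq S]
    (μ : I → Option S) :
    (Finset.univ.filter fun j => μ j = none).card +
      ∑ s, (Finset.univ.filter fun j => μ j = some s).card = Fintype.card I := by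
  rw [← Fintype.sum_option fun a => (Finset.univ.filter fun j => μ j = a).card]
  exact (Finset.card_eq_sum_card_fiberwise (by simp)).symm

theorem antitone_of_update_succ_le {ι α : Type*} [Fintype ι] [DecidableEq ι] [Preorder α]
    {f : (ι → ℕ) → α} (hf : ∀ c i, f (Function.update c i (c i + 1)) ≤ f c) : Antitone f := by
  intro c d hcd
  suffices h : ∀ n c, c ≤ d → ∑ i, (d i - c i) = n → f d ≤ f c from h _ c hcd rfl
  intro n
  induction n with
  | zero =>
    intro c hcd h
    obtain rfl : c = d := funext fun i => by
      have := Finset.sum_eq_zero_iff.1 h i (Finset.mem_univ i)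
      have : c i ≤ d i := hcd i
      omega
    exact le_rfl
  | succ n ih =>
    intro c hcd h
    obtain ⟨i, hi⟩ : ∃ i, c i < d i := by
      by_contra! hall
      rw [Finset.sum_eq_zero fun i _ => Nat.sub_eq_zero_of_le (hall i)] at h
      omega
    refine (ih (Function.update c i (c i + 1)) (fun j => ?_) ?_).trans (hf c i)
    · by_cases hj : j = i
      · subst hj
        simpa using hi
      · simpa [Function.update_of_ne hj] using hcd j
    · rw [← Finset.add_sum_erase _ _ (Finset.mem_univ i)] at h ⊢
      rw [Finset.sum_congr rfl fun j hj => by rw [Function.update_of_ne (Finset.ne_of_mem_erase hj)]]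
      simp only [Function.update_self]
      omega

/-- Until a fixed point is reached, every iteration raises the coordinate sum. -/
theorem isFixedPt_iterate_of_sum_le {ι : Type*} [Fintype ι] {f : (ι → ℕ) → ι → ℕ}
    {x : ι → ℕ} {N : ℕ} (hf : ∀ y i, y i ≤ f y i) (hN : ∑ i, f^[N + 1] x i ≤ N) :
    Function.IsFixedPt f (f^[N + 1] x) := by
  by_contra hfix
  have hgrow : ∀ n ≤ N + 1, n ≤ ∑ i, f^[n] x i := by
    intro n
    induction n with
    | zero => exact fun _ => Nat.zero_le _
    | succ n ih =>
      intro hn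
      have hne : f (f^[n] x) ≠ f^[n] x := fun h => hfix <| by
        rw [show N + 1 = (N + 1 - n) + n by omega, Function.iterate_add_apply,
          Function.iterate_fixed h]
        exact h
      have hlt : ∑ i, f^[n] x i < ∑ i, f^[n + 1] x i := by
        rw [Function.iterate_succ_apply']
        refine Finset.sum_lt_sum (fun i _ => hf _ i) ?_
        by_contra! hle
        exact hne (funext fun i => le_antisymm (hle i (Finset.mem_univ i)) (hf _ i))
      have := ih (by omega)
      omega
  have := hgrow (N + 1) le_rfl
  omega

section Preferences

variable {S : Type*} {p : List (Option S)} {s : S}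

theorem map_some_acceptables (p : List (Option S)) :
    (acceptables p).map some = p.takeWhile Option.isSome := by
  have h : ∀ x ∈ p.takeWhile Option.isSome, x.isSome := fun _ hx => List.mem_takeWhile_imp hx
  unfold acceptables
  generalize p.takeWhile Option.isSome = l at h ⊢
  induction l with
  | nil => rfl
  | cons a l ih =>
    obtain ⟨b, rfl⟩ := Option.isSome_iff_exists.1 (h a (List.mem_cons_self ..))
    simpa using ih fun x hx => h x (List.mem_cons_of_mem _ hx)

theorem ValidPref.eq_append (hp : ValidPref p) :
    ∃ rest, p = (acceptables p).map some ++ none :: rest := by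
  have hnone : (none : Option S) ∈ p.dropWhile Option.isSome := by
    have := hp.2 none
    rw [← List.takeWhile_append_dropWhile (p := Option.isSome) (l := p)] at this
    exact (List.mem_append.1 this).resolve_left fun h => by simpa using List.mem_takeWhile_imp h
  obtain ⟨a, rest, hdrop⟩ := List.exists_cons_of_ne_nil (List.ne_nil_of_mem hnone)
  have ha : a = none := by
    simpa [hdrop] using List.head?_dropWhile_not Option.isSome p
  refine ⟨rest, ?_⟩
  rw [map_some_acceptables, ← ha, ← hdrop]
  exact List.takeWhile_append_dropWhile.symm

theorem ValidPref.nodup_acceptables (hp : ValidPref p) : (acceptables p).Nodup := by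
  have h : ((acceptables p).map some).Nodup := by
    rw [map_some_acceptables]
    exact hp.1.sublist (List.takeWhile_sublist _)
  exact h.of_map some

variable [DecidableEq S]

theorem acceptables_truncate (p : List (Option S)) (k : ℕ) :
    acceptables (truncate p k) = (acceptables p).take k := by
  unfold truncate
  rw [acceptables, List.takeWhile_append_of_pos (fun a ha => by
      obtain ⟨t, -, rfl⟩ := List.mem_map.1 ha
      rfl),
    List.takeWhile_cons_of_neg (by simp), List.append_nil, List.filterMap_map]
  exact List.filterMap_some

theorem ValidPref.truncate (hp : ValidPref p) (k : ℕ) : ValidPref (truncate p k) := by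
  have hnodup : ((acceptables p).take k).Nodup :=
    hp.nodup_acceptables.sublist (List.take_sublist _ _)
  refine ⟨?_, fun x => ?_⟩
  · refine List.nodup_append.2 ⟨hnodup.map (Option.some_injective S),
      List.nodup_cons.2 ⟨by simp, hp.1.filter _⟩, ?_⟩
    rintro a ha b hb rfl
    rcases List.mem_cons.1 hb with rfl | hb
    · obtain ⟨t, -, ht⟩ := List.mem_map.1 ha
      exact absurd ht (by simp)
    · simp_all
  · unfold SchoolChoice.truncate
    by_cases hx : x ∈ ((acceptables p).take k).map some
    · exact List.mem_append_left _ hx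
    · rcases x with _ | x
      · simp
      · exact List.mem_append_right _ (List.mem_cons_of_mem _ (by simp_all [hp.2 (some x)]))

theorem idxOf_map_some (l : List S) (s : S) : (l.map some).idxOf (some s) = l.idxOf s := by
  induction l with
  | nil => rfl
  | cons a l ih => by_cases h : a = s <;> simp [h, ih]

/-- Unacceptable schools get the rank of the outside option (`idxOf` of a non-member is the
length); the rank is only compared on individually rational options. -/
def accRank (p : List (Option S)) : Option S → ℕ
  | none => (acceptables p).length
  | some s => (acceptables p).idxOf s

theorem ValidPref.idxOf_some_of_mem (hp : ValidPref p) (hs : s ∈ acceptables p) :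
    p.idxOf (some s) = (acceptables p).idxOf s := by
  obtain ⟨rest, hrest⟩ := hp.eq_append
  conv_lhs => rw [hrest]
  rw [List.idxOf_append_of_mem (List.mem_map_of_mem hs)]
  exact idxOf_map_some _ _

theorem ValidPref.idxOf_none (hp : ValidPref p) : p.idxOf none = (acceptables p).length := by
  obtain ⟨rest, hrest⟩ := hp.eq_append
  conv_lhs => rw [hrest]
  rw [List.idxOf_append_of_notMem (by simp)]
  simp

theorem ValidPref.length_lt_idxOf_some (hp : ValidPref p) (hs : s ∉ acceptables p) :
    (acceptables p).length < p.idxOf (some s) := by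
  obtain ⟨rest, hrest⟩ := hp.eq_append
  conv_rhs => rw [hrest]
  rw [List.idxOf_append_of_notMem (by simpa using hs)]
  simp

theorem ValidPref.prefLt_some_none_iff (hp : ValidPref p) :
    prefLt p (some s) none ↔ s ∈ acceptables p := by
  unfold prefLt
  rw [hp.idxOf_none]
  by_cases hs : s ∈ acceptables p
  · simpa [hs, hp.idxOf_some_of_mem hs] using List.idxOf_lt_length_of_mem hs
  · simpa [hs] using (hp.length_lt_idxOf_some hs).le

theorem ValidPref.prefLt_none_some_iff (hp : ValidPref p) :
    prefLt p none (some s) ↔ s ∉ acceptables p := by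
  unfold prefLt
  rw [hp.idxOf_none]
  by_cases hs : s ∈ acceptables p
  · simpa [hs, hp.idxOf_some_of_mem hs] using (List.idxOf_lt_length_of_mem hs).le
  · simpa [hs] using hp.length_lt_idxOf_some hs

theorem ValidPref.not_prefLt_none_some (hp : ValidPref p) (hs : s ∈ acceptables p) :
    ¬ prefLt p none (some s) := by
  rwa [hp.prefLt_none_some_iff, not_not]

theorem ValidPref.idxOf_eq_accRank (hp : ValidPref p) {a : Option S}
    (ha : ¬ prefLt p none a) : p.idxOf a = accRank p a := by
  rcases a with _ | s
  · exact hp.idxOf_none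
  · exact hp.idxOf_some_of_mem (by simpa [hp.prefLt_none_some_iff] using ha)

theorem ValidPref.prefLt_iff_accRank_lt (hp : ValidPref p) {a b : Option S}
    (ha : ¬ prefLt p none a) (hb : ¬ prefLt p none b) :
    prefLt p a b ↔ accRank p a < accRank p b := by
  rw [prefLt, hp.idxOf_eq_accRank ha, hp.idxOf_eq_accRank hb]

theorem ValidPref.mem_acceptables_of_prefLt (hp : ValidPref p) {b : Option S}
    (hb : ¬ prefLt p none b) (h : prefLt p (some s) b) : s ∈ acceptables p := by
  rw [← hp.prefLt_some_none_iff]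
  unfold prefLt at *
  omega

theorem ValidPref.accRank_of_getElem? (hp : ValidPref p) {r : ℕ}
    (h : (acceptables p)[r]? = some s) : accRank p (some s) = r := by
  obtain ⟨hr, rfl⟩ := List.getElem?_eq_some_iff.1 h
  exact hp.nodup_acceptables.idxOf_getElem r hr

theorem ValidPref.eq_of_accRank_eq (hp : ValidPref p) {a : Option S} {r : ℕ}
    (ha : ¬ prefLt p none a) (h : (acceptables p)[r]? = some s) (hr : accRank p a = r) :
    a = some s := by
  rcases a with _ | t
  · have := (List.getElem?_eq_some_iff.1 h).1
    simp only [accRank] at hr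
    omega
  · have ht : t ∈ acceptables p := by simpa [hp.prefLt_none_some_iff] using ha
    simp only [accRank] at hr
    rw [← hr, List.getElem?_idxOf ht] at h
    rw [h]

theorem accRank_truncate {k : ℕ} (hs : s ∈ (acceptables p).take k) :
    accRank (truncate p k) (some s) = accRank p (some s) := by
  simp only [accRank, acceptables_truncate]
  exact (List.take_prefix k _).idxOf_eq_of_mem hs

end Preferences

section Claims

variable {I S : Type*} [Fintype I] [DecidableEq I] [DecidableEq S]

/-- The second conjunct of `Blocks`. -/
def Claims (prio : S → List I) (q : S → ℕ) (μ : I → Option S) (s : S) (x : I) : Prop :=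
  (Finset.univ.filter fun j => μ j = some s).card < q s ∨ ∃ j, μ j = some s ∧ prioLt (prio s) x j

end Claims

section DeferredAcceptance

open Relation

variable {I S : Type*} {R R' : I → List (Option S)} {σ σ' : I → ℕ} {i j x : I} {s : S}

theorem daTarget_congr (h : ∀ i, acceptables (R' i) = acceptables (R i)) :
    daTarget R' σ = daTarget R σ := by
  funext i
  simp [daTarget, h]

theorem daTarget_eq_none_iff : daTarget R σ i = none ↔ (acceptables (R i)).length ≤ σ i :=
  List.getElem?_eq_none_iff

variable [DecidableEq S] (prio : S → List I) (q : S → ℕ)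

def applicants (R : I → List (Option S)) (σ : I → ℕ) (s : S) : List I :=
  (prio s).filter (fun i => decide (daTarget R σ i = some s))

def IsRejected (R : I → List (Option S)) (σ : I → ℕ) (i : I) : Prop :=
  ∃ s, daTarget R σ i = some s ∧ i ∉ daHeld R prio q σ s

def IsTerminal (R : I → List (Option S)) (σ : I → ℕ) : Prop :=
  ∀ i, ¬ IsRejected prio q R σ i

/-- Both a move of a rejected student and the extension of an exhausted list are of this kind. -/
def RedirectsUnheld (R : I → List (Option S)) (σ : I → ℕ) (R' : I → List (Option S))
    (σ' : I → ℕ) (i : I) : Prop :=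
  (∀ j ≠ i, daTarget R' σ' j = daTarget R σ j) ∧
    ∀ s, daTarget R σ i = some s → i ∉ daHeld R prio q σ s

variable {prio q}

theorem daHeld_eq_take : daHeld R prio q σ s = (applicants prio R σ s).take (q s) := rfl

theorem mem_applicants (hprio : ∀ s, ValidPrio (prio s)) :
    i ∈ applicants prio R σ s ↔ daTarget R σ i = some s := by
  simp [applicants, (hprio s).2 i]

theorem daTarget_of_mem_daHeld (h : i ∈ daHeld R prio q σ s) : daTarget R σ i = some s := by
  simpa using (List.mem_filter.1 (List.mem_of_mem_take h)).2

theorem nodup_daHeld (hprio : ∀ s, ValidPrio (prio s)) : (daHeld R prio q σ s).Nodup :=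
  ((hprio s).1.filter _).sublist (List.take_sublist _ _)

theorem length_daHeld_le : (daHeld R prio q σ s).length ≤ q s := by
  simp [daHeld_eq_take]

theorem daHeld_congr (h : daTarget R' σ' = daTarget R σ) :
    daHeld R' prio q σ' = daHeld R prio q σ := by
  funext s
  simp [daHeld, h]

theorem isTerminal_congr (h : daTarget R' σ' = daTarget R σ) :
    IsTerminal prio q R' σ' ↔ IsTerminal prio q R σ := by
  simp [IsTerminal, IsRejected, h, daHeld_congr h]

theorem mem_daHeld_of_isTerminal (hterm : IsTerminal prio q R σ) (ht : daTarget R σ i = some s) :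
    i ∈ daHeld R prio q σ s := by
  by_contra hi
  exact hterm i ⟨s, ht, hi⟩

theorem applicants_eq_of_daTarget_iff (htgt : ∀ j ≠ i, daTarget R' σ' j = daTarget R σ j)
    (h : daTarget R' σ' i = some s ↔ daTarget R σ i = some s) :
    applicants prio R' σ' s = applicants prio R σ s :=
  List.filter_congr fun j _ => by
    by_cases hj : j = i
    · subst hj
      simp [h]
    · simp [htgt j hj]

theorem exists_applicants_eq_append_cons (hprio : ∀ s, ValidPrio (prio s))
    (htgt : ∀ j ≠ i, daTarget R' σ' j = daTarget R σ j) (h' : daTarget R' σ' i = some s)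
    (h : daTarget R σ i ≠ some s) :
    ∃ X Y, i ∉ X ∧ i ∉ Y ∧ applicants prio R σ s = X ++ Y ∧
      applicants prio R' σ' s = X ++ i :: Y :=
  exists_filter_eq_append_and_filter_eq_append_cons (hprio s).1
    (fun j hj => by simp [htgt j hj]) (by simpa using h) (by simpa using h') ((hprio s).2 i)

namespace RedirectsUnheld

theorem daHeld_eq (hprio : ∀ s, ValidPrio (prio s)) (h : RedirectsUnheld prio q R σ R' σ' i)
    (hs : daTarget R' σ' i = some s → daTarget R σ i = some s) :
    daHeld R' prio q σ' s = daHeld R prio q σ s := by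
  by_cases hiff : daTarget R' σ' i = some s ↔ daTarget R σ i = some s
  · rw [daHeld_eq_take, daHeld_eq_take, applicants_eq_of_daTarget_iff h.1 hiff]
  · have hold : daTarget R σ i = some s := by tauto
    obtain ⟨X, Y, -, -, hnew, hold'⟩ := exists_applicants_eq_append_cons hprio
      (fun j hj => (h.1 j hj).symm) hold (by tauto)
    have hi := h.2 s hold
    rw [daHeld_eq_take, hold'] at hi
    rw [daHeld_eq_take, daHeld_eq_take, hnew, hold', take_append_cons_of_not_mem_take hi]

theorem mem_daHeld (hprio : ∀ s, ValidPrio (prio s)) (h : RedirectsUnheld prio q R σ R' σ' i)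
    (hj : j ≠ i) (hjs : j ∈ daHeld R' prio q σ' s) :
    j ∈ daHeld R prio q σ s := by
  by_cases hins : daTarget R' σ' i = some s ∧ daTarget R σ i ≠ some s
  · obtain ⟨X, Y, -, -, hold, hnew⟩ := exists_applicants_eq_append_cons hprio h.1 hins.1 hins.2
    rw [daHeld_eq_take, hnew] at hjs
    rw [daHeld_eq_take, hold]
    exact mem_take_of_mem_take_append_cons hjs hj
  · rwa [← h.daHeld_eq hprio (by tauto)]

theorem length_daHeld_le (hprio : ∀ s, ValidPrio (prio s))
    (h : RedirectsUnheld prio q R σ R' σ' i) :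
    (daHeld R prio q σ s).length ≤ (daHeld R' prio q σ' s).length := by
  by_cases hins : daTarget R' σ' i = some s ∧ daTarget R σ i ≠ some s
  · obtain ⟨X, Y, -, -, hold, hnew⟩ := exists_applicants_eq_append_cons hprio h.1 hins.1 hins.2
    rw [daHeld_eq_take, daHeld_eq_take, hold, hnew]
    exact length_take_le_length_take_append_cons
  · rw [h.daHeld_eq hprio (by tauto)]

end RedirectsUnheld

variable [DecidableEq I] (prio q)

/-- Unlike `daStep`, which moves all rejected students at once, a move advances a single one. -/
def DAMove (R : I → List (Option S)) (σ σ' : I → ℕ) : Prop :=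
  ∃ i, IsRejected prio q R σ i ∧ σ' = Function.update σ i (σ i + 1)

def Admits (R : I → List (Option S)) (σ : I → ℕ) (s : S) (x : I) : Prop :=
  (daHeld R prio q σ s).length < q s ∨ ∃ j ∈ daHeld R prio q σ s, prioLt (prio s) x j

def heldMatching (R : I → List (Option S)) (σ : I → ℕ) (i : I) : Option S :=
  match daTarget R σ i with
  | none => none
  | some s => if i ∈ daHeld R prio q σ s then some s else none

variable {prio q}

theorem pairwise_applicants (hprio : ∀ s, ValidPrio (prio s)) :
    (applicants prio R σ s).Pairwise (prioLt (prio s)) :=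
  (hprio s).1.pairwise_idxOf_lt.sublist List.filter_sublist

theorem full_of_not_mem_daHeld (hprio : ∀ s, ValidPrio (prio s))
    (ht : daTarget R σ i = some s) (hi : i ∉ daHeld R prio q σ s) :
    (daHeld R prio q σ s).length = q s ∧ ∀ j ∈ daHeld R prio q σ s, prioLt (prio s) j i :=
  length_take_eq_and_rel_of_not_mem_take (pairwise_applicants hprio)
    ((mem_applicants hprio).2 ht) hi

theorem not_admits_of_not_mem_daHeld (hprio : ∀ s, ValidPrio (prio s))
    (ht : daTarget R σ i = some s) (hi : i ∉ daHeld R prio q σ s) :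
    ¬ Admits prio q R σ s i := by
  obtain ⟨hfull, hdom⟩ := full_of_not_mem_daHeld hprio ht hi
  rintro (hlt | ⟨j, hj, hij⟩)
  · omega
  · exact lt_asymm hij (hdom j hj)

theorem admits_of_mem_daHeld_of_redirectsUnheld (hprio : ∀ s, ValidPrio (prio s))
    (h : RedirectsUnheld prio q R σ R' σ' i) (hi : i ∈ daHeld R' prio q σ' s) :
    Admits prio q R σ s i := by
  by_cases hold : daTarget R σ i = some s
  · exact absurd (h.daHeld_eq hprio (fun _ => hold) ▸ hi) (h.2 s hold)
  obtain ⟨X, Y, hX, -, hold', hnew⟩ :=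
    exists_applicants_eq_append_cons hprio h.1 (daTarget_of_mem_daHeld hi) hold
  have hpw := pairwise_applicants (R := R') (σ := σ') (s := s) hprio
  rw [hnew] at hpw
  rw [daHeld_eq_take, hnew] at hi
  simpa only [Admits, daHeld_eq_take, hold'] using exists_rel_of_mem_take_append_cons hpw hX hi

theorem Admits.of_redirectsUnheld (hprio : ∀ s, ValidPrio (prio s))
    (h : RedirectsUnheld prio q R σ R' σ' i) (hx : Admits prio q R' σ' s x) :
    Admits prio q R σ s x := by
  rcases hx with hlt | ⟨j, hj, hxj⟩
  · exact Or.inl ((h.length_daHeld_le hprio).trans_lt hlt)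
  by_cases hji : j = i
  · subst hji
    rcases admits_of_mem_daHeld_of_redirectsUnheld hprio h hj with hlt | ⟨k, hk, hjk⟩
    · exact Or.inl hlt
    · exact Or.inr ⟨k, hk, Nat.lt_trans hxj hjk⟩
  · exact Or.inr ⟨j, h.mem_daHeld hprio hji hj, hxj⟩

theorem redirectsUnheld_update (hi : IsRejected prio q R σ i) :
    RedirectsUnheld prio q R σ R (Function.update σ i (σ i + 1)) i := by
  refine ⟨fun j hj => by simp [daTarget, Function.update_of_ne hj], fun s hs => ?_⟩
  obtain ⟨s', hs', hn⟩ := hi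
  obtain rfl := Option.some.inj (hs.symm.trans hs')
  exact hn

theorem Admits.of_reflTransGen (hprio : ∀ s, ValidPrio (prio s))
    (h : ReflTransGen (DAMove prio q R) σ σ') (hx : Admits prio q R σ' s x) :
    Admits prio q R σ s x := by
  induction h with
  | refl => exact hx
  | tail _ hmove ih =>
    obtain ⟨i, hi, rfl⟩ := hmove
    exact ih (hx.of_redirectsUnheld hprio (redirectsUnheld_update hi))

theorem length_daHeld_le_of_reflTransGen (hprio : ∀ s, ValidPrio (prio s))
    (h : ReflTransGen (DAMove prio q R) σ σ') :
    (daHeld R prio q σ s).length ≤ (daHeld R prio q σ' s).length := by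
  induction h with
  | refl => exact le_rfl
  | tail _ hmove ih =>
    obtain ⟨i, hi, rfl⟩ := hmove
    exact ih.trans ((redirectsUnheld_update hi).length_daHeld_le hprio)

theorem le_of_daMove (h : DAMove prio q R σ σ') (j : I) : σ j ≤ σ' j := by
  obtain ⟨i, -, rfl⟩ := h
  by_cases hj : j = i
  · subst hj
    simp
  · simp [Function.update_of_ne hj]

theorem le_of_reflTransGen (h : ReflTransGen (DAMove prio q R) σ σ') (j : I) : σ j ≤ σ' j := by
  induction h with
  | refl => exact le_rfl
  | tail _ hmove ih => exact ih.trans (le_of_daMove hmove j)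

theorem le_length_of_reflTransGen (h : ReflTransGen (DAMove prio q R) 0 σ) (j : I) :
    σ j ≤ (acceptables (R j)).length := by
  induction h with
  | refl => exact Nat.zero_le _
  | @tail τ _ _ hmove ih =>
    obtain ⟨i, ⟨s, hs, -⟩, rfl⟩ := hmove
    by_cases hj : j = i
    · subst hj
      have : ¬ (acceptables (R j)).length ≤ τ j := by simp [← daTarget_eq_none_iff, hs]
      simp only [Function.update_self]
      omega
    · simpa [Function.update_of_ne hj] using ih

theorem IsRejected.of_reflTransGen (hprio : ∀ s, ValidPrio (prio s))
    (h : ReflTransGen (DAMove prio q R) σ σ') (hi : IsRejected prio q R σ i)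
    (hσ : σ' i = σ i) : IsRejected prio q R σ' i := by
  induction h with
  | refl => exact hi
  | @tail τ τ' hrun hmove ih =>
    have hτ : τ i = σ i := le_antisymm (hσ ▸ le_of_daMove hmove i) (le_of_reflTransGen hrun i)
    obtain ⟨k, hk, rfl⟩ := hmove
    have hik : i ≠ k := by
      rintro rfl
      rw [Function.update_self] at hσ
      omega
    obtain ⟨s, hs, hn⟩ := ih hτ
    have hred := redirectsUnheld_update hk
    exact ⟨s, (hred.1 i hik).trans hs, fun hmem => hn (hred.mem_daHeld hprio hik hmem)⟩

theorem daStep_of_isRejected (h : IsRejected prio q R σ i) : daStep R prio q σ i = σ i + 1 := by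
  obtain ⟨s, hs, hn⟩ := h
  simp [daStep, hs, hn]

theorem daStep_of_not_isRejected (h : ¬ IsRejected prio q R σ i) : daStep R prio q σ i = σ i := by
  unfold daStep
  split
  · rfl
  · rename_i s hs
    rw [if_pos (by by_contra hn; exact h ⟨s, hs, hn⟩)]

theorem reflTransGen_daStep [Fintype I] (hprio : ∀ s, ValidPrio (prio s)) :
    ReflTransGen (DAMove prio q R) σ (daStep R prio q σ) := by
  classical
  suffices h : ∀ T : Finset I, (∀ i ∈ T, IsRejected prio q R σ i) →
      ReflTransGen (DAMove prio q R) σ (fun i => if i ∈ T then σ i + 1 else σ i) by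
    convert h (Finset.univ.filter (IsRejected prio q R σ)) (by simp) using 1
    funext i
    by_cases hi : IsRejected prio q R σ i
    · simp [hi, daStep_of_isRejected hi]
    · simp [hi, daStep_of_not_isRejected hi]
  intro T hT
  induction T using Finset.induction_on with
  | empty => simpa using ReflTransGen.refl
  | insert a T haT ih =>
    have hrun := ih fun i hi => hT i (Finset.mem_insert_of_mem hi)
    have ha := (hT a (Finset.mem_insert_self a T)).of_reflTransGen hprio hrun (by simp [haT])
    refine hrun.tail ⟨a, ha, ?_⟩
    funext i
    by_cases hia : i = a
    · subst hia
      simp [haT]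
    · simp [hia]

theorem daStep_eq_self_iff : daStep R prio q σ = σ ↔ IsTerminal prio q R σ := by
  refine ⟨fun h i hi => by simpa [daStep_of_isRejected hi] using congrFun h i, fun h => ?_⟩
  funext i
  exact daStep_of_not_isRejected (h i)

theorem le_daStep (i : I) : σ i ≤ daStep R prio q σ i := by
  by_cases hi : IsRejected prio q R σ i
  · simp [daStep_of_isRejected hi]
  · simp [daStep_of_not_isRejected hi]

theorem reflTransGen_iterate [Fintype I] (hprio : ∀ s, ValidPrio (prio s)) (n : ℕ) :
    ReflTransGen (DAMove prio q R) σ ((daStep R prio q)^[n] σ) := by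
  induction n with
  | zero => exact ReflTransGen.refl
  | succ n ih =>
    rw [Function.iterate_succ_apply']
    exact ih.trans (reflTransGen_daStep hprio)

theorem isTerminal_iterate [Fintype I] [Fintype S] (hprio : ∀ s, ValidPrio (prio s))
    (hR : ∀ i, ValidPref (R i)) (hreach : ReflTransGen (DAMove prio q R) 0 σ) :
    IsTerminal prio q R ((daStep R prio q)^[Fintype.card I * Fintype.card S + 1] σ) := by
  rw [← daStep_eq_self_iff]
  refine isFixedPt_iterate_of_sum_le (fun _ i => le_daStep i) ?_
  calc ∑ i, (daStep R prio q)^[Fintype.card I * Fintype.card S + 1] σ i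
      ≤ ∑ _i : I, Fintype.card S := Finset.sum_le_sum fun i _ =>
        (le_length_of_reflTransGen (hreach.trans (reflTransGen_iterate hprio _)) i).trans
          (hR i).nodup_acceptables.length_le_card
    _ = Fintype.card I * Fintype.card S := by simp

theorem heldMatching_eq_some_iff :
    heldMatching prio q R σ i = some s ↔ i ∈ daHeld R prio q σ s := by
  refine ⟨fun h => ?_, fun h => by simp [heldMatching, daTarget_of_mem_daHeld h, h]⟩
  unfold heldMatching at h
  split at h
  · simp at h
  · split_ifs at h with hi
    cases h
    exact hi

theorem heldMatching_congr (h : daTarget R' σ' = daTarget R σ) :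
    heldMatching prio q R' σ' = heldMatching prio q R σ := by
  funext i
  simp [heldMatching, h, daHeld_congr h]

theorem heldMatching_eq_none_of_daTarget (h : daTarget R σ i = none) :
    heldMatching prio q R σ i = none := by
  simp [heldMatching, h]

theorem heldMatching_eq_none_iff (hterm : IsTerminal prio q R σ) :
    heldMatching prio q R σ i = none ↔ daTarget R σ i = none := by
  cases ht : daTarget R σ i with
  | none => simp [heldMatching, ht]
  | some s => simp [heldMatching, ht, mem_daHeld_of_isTerminal hterm ht]

theorem accRank_heldMatching (hR : ValidPref (R i)) (hterm : IsTerminal prio q R σ)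
    (hreach : ReflTransGen (DAMove prio q R) 0 σ) :
    accRank (R i) (heldMatching prio q R σ i) = σ i := by
  cases ht : daTarget R σ i with
  | none =>
    rw [(heldMatching_eq_none_iff hterm).2 ht]
    exact le_antisymm (daTarget_eq_none_iff.1 ht) (le_length_of_reflTransGen hreach i)
  | some s =>
    rw [heldMatching_eq_some_iff.2 (mem_daHeld_of_isTerminal hterm ht)]
    exact hR.accRank_of_getElem? ht

theorem not_prefLt_none_heldMatching (hR : ValidPref (R i)) :
    ¬ prefLt (R i) none (heldMatching prio q R σ i) := by
  cases h : heldMatching prio q R σ i with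
  | none => simp [prefLt]
  | some s =>
    rw [hR.prefLt_none_some_iff, not_not]
    exact List.mem_of_getElem? (daTarget_of_mem_daHeld (heldMatching_eq_some_iff.1 h))

theorem not_admits_of_lt (hprio : ∀ s, ValidPrio (prio s))
    (h : ReflTransGen (DAMove prio q R) 0 σ) {r : ℕ} (hr : r < σ i)
    (hs : (acceptables (R i))[r]? = some s) : ¬ Admits prio q R σ s i := by
  induction h with
  | refl => simp at hr
  | @tail τ _ _ hmove ih =>
    obtain ⟨k, hk, rfl⟩ := hmove
    intro hadmit
    have hadmitτ := hadmit.of_redirectsUnheld hprio (redirectsUnheld_update hk)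
    by_cases hik : i = k
    · subst hik
      rw [Function.update_self] at hr
      rcases Nat.lt_succ_iff_lt_or_eq.1 hr with hlt | rfl
      · exact ih hlt hadmitτ
      · obtain ⟨s', hs', hn⟩ := hk
        obtain rfl : s' = s := Option.some.inj (hs'.symm.trans hs)
        exact not_admits_of_not_mem_daHeld hprio hs' hn hadmitτ
    · rw [Function.update_of_ne hik] at hr
      exact ih hr hadmitτ

variable [Fintype I]

theorem card_heldMatching_eq_some (hprio : ∀ s, ValidPrio (prio s)) :
    (Finset.univ.filter fun j => heldMatching prio q R σ j = some s).card =
      (daHeld R prio q σ s).length := by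
  rw [← List.toFinset_card_of_nodup (nodup_daHeld hprio)]
  congr 1
  ext j
  simp [heldMatching_eq_some_iff]

theorem isMatching_heldMatching (hprio : ∀ s, ValidPrio (prio s)) :
    IsMatching q (heldMatching prio q R σ) := fun s => by
  rw [card_heldMatching_eq_some hprio]
  exact length_daHeld_le

theorem claims_heldMatching_iff (hprio : ∀ s, ValidPrio (prio s)) :
    Claims prio q (heldMatching prio q R σ) s x ↔ Admits prio q R σ s x := by
  rw [Claims, card_heldMatching_eq_some hprio]
  simp only [Admits, heldMatching_eq_some_iff]

theorem isStable_heldMatching (hprio : ∀ s, ValidPrio (prio s)) (hR : ∀ i, ValidPref (R i))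
    (hterm : IsTerminal prio q R σ) (hreach : ReflTransGen (DAMove prio q R) 0 σ) :
    IsStable R prio q (heldMatching prio q R σ) := by
  refine ⟨fun i => not_prefLt_none_heldMatching (hR i), fun i ⟨s, hblock⟩ => ?_⟩
  obtain ⟨hpref, hclaim⟩ := hblock
  have hadmit := (claims_heldMatching_iff hprio).1 hclaim
  have hIR := not_prefLt_none_heldMatching (hR i) (prio := prio) (q := q) (σ := σ)
  have hs := (hR i).mem_acceptables_of_prefLt hIR hpref
  have hrank : accRank (R i) (some s) < σ i := by
    rw [← accRank_heldMatching (hR i) hterm hreach]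
    exact ((hR i).prefLt_iff_accRank_lt ((hR i).not_prefLt_none_some hs) hIR).1 hpref
  exact not_admits_of_lt hprio hreach hrank (List.getElem?_idxOf hs) hadmit

theorem exists_mem_daHeld_ne_of_isMatching (hprio : ∀ s, ValidPrio (prio s))
    {α : I → Option S} (hα : IsMatching q α) (ht : daTarget R σ i = some s)
    (hi : i ∉ daHeld R prio q σ s) (hαi : α i = some s) :
    ∃ k ∈ daHeld R prio q σ s, α k ≠ some s := by
  by_contra! hall
  have hsub : insert i (daHeld R prio q σ s).toFinset ⊆
      Finset.univ.filter fun j => α j = some s := by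
    intro j hj
    rcases Finset.mem_insert.1 hj with rfl | hj
    · simpa using hαi
    · simpa using hall j (List.mem_toFinset.1 hj)
  have hcard := Finset.card_le_card hsub
  rw [Finset.card_insert_of_notMem (by simpa using hi),
    List.toFinset_card_of_nodup (nodup_daHeld hprio),
    (full_of_not_mem_daHeld hprio ht hi).1] at hcard
  have := hα s
  omega

/-- A student rejected by her school `s` in `α` finds `s` holding `q s` students who outrank her;
one of them is not placed at `s` by `α`, and she blocks `α` at `s`. -/
theorem le_accRank_of_isStable (hprio : ∀ s, ValidPrio (prio s)) (hR : ∀ i, ValidPref (R i))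
    {α : I → Option S} (hα : IsMatching q α) (hαs : IsStable R prio q α)
    (h : ReflTransGen (DAMove prio q R) 0 σ) (i : I) : σ i ≤ accRank (R i) (α i) := by
  induction h generalizing i with
  | refl => exact Nat.zero_le _
  | @tail τ _ _ hmove ih =>
    obtain ⟨j, ⟨s, ht, hn⟩, rfl⟩ := hmove
    by_cases hij : i = j
    swap
    · simpa [Function.update_of_ne hij] using ih i
    subst hij
    rw [Function.update_self]
    refine lt_of_le_of_ne (ih i) fun heq => ?_
    have hαi : α i = some s := (hR i).eq_of_accRank_eq (hαs.1 i) ht heq.symm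
    obtain ⟨k, hk, hαk⟩ := exists_mem_daHeld_ne_of_isMatching hprio hα ht hn hαi
    have htk := daTarget_of_mem_daHeld hk
    have hsk : s ∈ acceptables (R k) := List.mem_of_getElem? htk
    have hlt : τ k < accRank (R k) (α k) := lt_of_le_of_ne (ih k) fun heq' =>
      hαk ((hR k).eq_of_accRank_eq (hαs.1 k) htk heq'.symm)
    refine hαs.2 k ⟨s, ?_, Or.inr ⟨i, hαi, (full_of_not_mem_daHeld hprio ht hn).2 k hk⟩⟩
    rw [(hR k).prefLt_iff_accRank_lt ((hR k).not_prefLt_none_some hsk) (hαs.1 k),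
      (hR k).accRank_of_getElem? htk]
    exact hlt

/-- Each terminal state encodes the student-optimal stable matching. -/
theorem eq_of_isTerminal (hprio : ∀ s, ValidPrio (prio s)) (hR : ∀ i, ValidPref (R i))
    (hterm : IsTerminal prio q R σ) (hreach : ReflTransGen (DAMove prio q R) 0 σ)
    (hterm' : IsTerminal prio q R σ') (hreach' : ReflTransGen (DAMove prio q R) 0 σ') :
    σ = σ' := by
  have key : ∀ {σ σ'}, IsTerminal prio q R σ' → ReflTransGen (DAMove prio q R) 0 σ →
      ReflTransGen (DAMove prio q R) 0 σ' → ∀ i, σ i ≤ σ' i := fun hterm' hreach hreach' i => by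
    simpa [accRank_heldMatching (hR i) hterm' hreach'] using
      le_accRank_of_isStable hprio hR (isMatching_heldMatching hprio)
        (isStable_heldMatching hprio hR hterm' hreach') hreach i
  exact funext fun i => le_antisymm (key hterm' hreach hreach' i) (key hterm hreach' hreach i)

theorem GS_eq_heldMatching [Fintype S] (hprio : ∀ s, ValidPrio (prio s))
    (hR : ∀ i, ValidPref (R i)) (hterm : IsTerminal prio q R σ)
    (hreach : ReflTransGen (DAMove prio q R) 0 σ) : GS R prio q = heldMatching prio q R σ := by
  rw [eq_of_isTerminal hprio hR hterm hreach (isTerminal_iterate hprio hR .refl)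
    (reflTransGen_iterate hprio _)]
  rfl

theorem isStable_GS [Fintype S] (hprio : ∀ s, ValidPrio (prio s)) (hR : ∀ i, ValidPref (R i)) :
    IsStable R prio q (GS R prio q) :=
  isStable_heldMatching hprio hR (isTerminal_iterate hprio hR .refl) (reflTransGen_iterate hprio _)

theorem GS_eq_of_daTarget_eq [Fintype S] (hprio : ∀ s, ValidPrio (prio s))
    (hR : ∀ i, ValidPref (R i)) (hR' : ∀ i, ValidPref (R' i)) (hterm : IsTerminal prio q R σ)
    (hreach : ReflTransGen (DAMove prio q R) 0 σ) (hreach' : ReflTransGen (DAMove prio q R') 0 σ')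
    (h : daTarget R' σ' = daTarget R σ) : GS R' prio q = GS R prio q := by
  rw [GS_eq_heldMatching hprio hR' ((isTerminal_congr h).2 hterm) hreach',
    GS_eq_heldMatching hprio hR hterm hreach, heldMatching_congr h]

theorem claims_heldMatching_of_reflTransGen {σ'' : I → ℕ} (hprio : ∀ s, ValidPrio (prio s))
    (hred : RedirectsUnheld prio q R σ R' σ'' i) (hrun : ReflTransGen (DAMove prio q R') σ'' σ')
    (hx : Claims prio q (heldMatching prio q R' σ') s x) :
    Claims prio q (heldMatching prio q R σ) s x :=
  (claims_heldMatching_iff hprio).2 ((((claims_heldMatching_iff hprio).1 hx).of_reflTransGen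
    hprio hrun).of_redirectsUnheld hprio hred)

theorem ncard_heldMatching_eq_none_le [Fintype S] {σ'' : I → ℕ}
    (hprio : ∀ s, ValidPrio (prio s)) (hred : RedirectsUnheld prio q R σ R' σ'' i)
    (hrun : ReflTransGen (DAMove prio q R') σ'' σ') :
    {j | heldMatching prio q R' σ' j = none}.ncard ≤
      {j | heldMatching prio q R σ j = none}.ncard := by
  have hsum : ∑ s, (Finset.univ.filter fun j => heldMatching prio q R σ j = some s).card ≤
      ∑ s, (Finset.univ.filter fun j => heldMatching prio q R' σ' j = some s).card :=
    Finset.sum_le_sum fun s _ => by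
      rw [card_heldMatching_eq_some hprio, card_heldMatching_eq_some hprio]
      exact (hred.length_daHeld_le hprio).trans (length_daHeld_le_of_reflTransGen hprio hrun)
  have h := card_filter_eq_none_add_sum (heldMatching prio q R σ)
  have h' := card_filter_eq_none_add_sum (heldMatching prio q R' σ')
  simp only [Set.ncard_eq_toFinset_card', Set.toFinset_ofPred]
  omega

end DeferredAcceptance

section BlockingStudents

variable {I S : Type*} [Fintype I] [DecidableEq I] [DecidableEq S] {P : I → List (Option S)}
  {prio : S → List I} {q : S → ℕ} {μ ν : I → Option S} {x : I}

/-- A school a matched student prefers to her own lies within her truncated list. -/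
theorem eq_none_of_isStable_truncate (hP : ∀ i, ValidPref (P i)) {d : I → ℕ}
    (hμ : IsStable (fun i => truncate (P i) (d i)) prio q μ)
    (hx : BlockingStudent P prio q μ x) : μ x = none := by
  rcases hm : μ x with _ | s
  · rfl
  exfalso
  obtain ⟨s', hpref, hclaim⟩ := hx
  have hRx := (hP x).truncate (d x)
  have hs : s ∈ (acceptables (P x)).take (d x) := by
    simpa [hm, hRx.prefLt_none_some_iff, acceptables_truncate] using hμ.1 x
  have hsP : s ∈ acceptables (P x) := List.mem_of_mem_take hs
  rw [hm] at hpref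
  have hs'P := (hP x).mem_acceptables_of_prefLt ((hP x).not_prefLt_none_some hsP) hpref
  have hlt := ((hP x).prefLt_iff_accRank_lt ((hP x).not_prefLt_none_some hs'P)
    ((hP x).not_prefLt_none_some hsP)).1 hpref
  have hs' : s' ∈ (acceptables (P x)).take (d x) :=
    (List.mem_take_iff_idxOf_lt hs'P).2 (hlt.trans ((List.mem_take_iff_idxOf_lt hsP).1 hs))
  refine hμ.2 x ⟨s', ?_, hclaim⟩
  rw [hm, hRx.prefLt_iff_accRank_lt, accRank_truncate hs', accRank_truncate hs]
  · exact hlt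
  · exact hRx.not_prefLt_none_some (by rwa [acceptables_truncate])
  · exact hRx.not_prefLt_none_some (by rwa [acceptables_truncate])

theorem blockingStudent_of_claims (hclaims : ∀ s, Claims prio q μ s x → Claims prio q ν s x)
    (hμx : μ x = none) (hνx : ν x = none) (hx : BlockingStudent P prio q μ x) :
    BlockingStudent P prio q ν x := by
  obtain ⟨s, hpref, hclaim⟩ := hx
  exact ⟨s, by rwa [hνx, ← hμx], hclaims s hclaim⟩

end BlockingStudents

section Extension

open Relation

variable {I S : Type*} {R R' : I → List (Option S)} {σ σ' : I → ℕ} {i₀ : I} {s₀ : S}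

def AppendsSchool (R R' : I → List (Option S)) (i₀ : I) (s₀ : S) : Prop :=
  (∀ j ≠ i₀, acceptables (R' j) = acceptables (R j)) ∧
    acceptables (R' i₀) = acceptables (R i₀) ++ [s₀]

namespace AppendsSchool

theorem daTarget_eq (h : AppendsSchool R R' i₀ s₀)
    (hσ : σ i₀ ≠ (acceptables (R i₀)).length) : daTarget R' σ = daTarget R σ := by
  funext j
  by_cases hj : j = i₀
  · subst hj
    simp only [daTarget, h.2]
    rcases Nat.lt_or_gt_of_ne hσ with hlt | hgt
    · exact List.getElem?_append_left hlt
    · rw [List.getElem?_eq_none (by rw [List.length_append, List.length_singleton]; omega), List.getElem?_eq_none (by omega)]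
  · simp [daTarget, h.1 j hj]

theorem daTarget_self (h : AppendsSchool R R' i₀ s₀)
    (hσ : σ i₀ = (acceptables (R i₀)).length) : daTarget R' σ i₀ = some s₀ := by
  simp [daTarget, h.2, hσ]

theorem daTarget_update_self (h : AppendsSchool R R' i₀ s₀)
    (hσ : σ i₀ = (acceptables (R i₀)).length) [DecidableEq I] :
    daTarget R' (Function.update σ i₀ (σ i₀ + 1)) = daTarget R σ := by
  funext j
  by_cases hj : j = i₀
  · subst hj
    rw [daTarget_eq_none_iff.2 hσ.ge, daTarget_eq_none_iff]
    simp [h.2, hσ]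
  · simp [daTarget, Function.update_of_ne hj, h.1 j hj]

variable [DecidableEq S] {prio : S → List I} {q : S → ℕ}

theorem redirectsUnheld (h : AppendsSchool R R' i₀ s₀)
    (hσ : σ i₀ = (acceptables (R i₀)).length) : RedirectsUnheld prio q R σ R' σ i₀ :=
  ⟨fun j hj => by simp [daTarget, h.1 j hj],
    fun s hs => by simp [daTarget_eq_none_iff.2 hσ.ge] at hs⟩

variable [DecidableEq I]

theorem daMove (hprio : ∀ s, ValidPrio (prio s)) (h : AppendsSchool R R' i₀ s₀)
    (hmove : DAMove prio q R σ σ') (hσ : σ i₀ ≤ (acceptables (R i₀)).length) :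
    DAMove prio q R' σ σ' := by
  obtain ⟨j, ⟨s, hs, hn⟩, rfl⟩ := hmove
  by_cases hσ₀ : σ i₀ = (acceptables (R i₀)).length
  · have hji : j ≠ i₀ := by
      rintro rfl
      simp [daTarget_eq_none_iff.2 hσ₀.ge] at hs
    have hred := h.redirectsUnheld (prio := prio) (q := q) hσ₀
    exact ⟨j, ⟨s, (hred.1 j hji).trans hs, fun hm => hn (hred.mem_daHeld hprio hji hm)⟩, rfl⟩
  · have htgt := h.daTarget_eq hσ₀
    exact ⟨j, ⟨s, by rwa [htgt], by rwa [daHeld_congr htgt]⟩, rfl⟩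

theorem reflTransGen (hprio : ∀ s, ValidPrio (prio s)) (h : AppendsSchool R R' i₀ s₀)
    (hrun : ReflTransGen (DAMove prio q R) 0 σ) : ReflTransGen (DAMove prio q R') 0 σ := by
  induction hrun with
  | refl => exact .refl
  | tail hrun hmove ih => exact ih.tail (h.daMove hprio hmove (le_length_of_reflTransGen hrun i₀))

variable [Fintype I] [Fintype S]

theorem GS_eq_or (hprio : ∀ s, ValidPrio (prio s)) (hR : ∀ i, ValidPref (R i))
    (hR' : ∀ i, ValidPref (R' i)) (h : AppendsSchool R R' i₀ s₀) :
    GS R' prio q = GS R prio q ∨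
      (GS R prio q i₀ = none ∧ Claims prio q (GS R prio q) s₀ i₀ ∧
        (∀ s x, Claims prio q (GS R' prio q) s x → Claims prio q (GS R prio q) s x) ∧
        (∀ j ≠ i₀, GS R prio q j = none → GS R' prio q j = none) ∧
        {j | GS R' prio q j = none}.ncard ≤ {j | GS R prio q j = none}.ncard) := by
  set σ := (daStep R prio q)^[Fintype.card I * Fintype.card S + 1] 0
  have hterm : IsTerminal prio q R σ := isTerminal_iterate hprio hR .refl
  have hreach : ReflTransGen (DAMove prio q R) 0 σ := reflTransGen_iterate hprio _
  have hreach' := h.reflTransGen hprio hreach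
  by_cases hσ : σ i₀ = (acceptables (R i₀)).length
  swap
  · exact Or.inl (GS_eq_of_daTarget_eq hprio hR hR' hterm hreach hreach' (h.daTarget_eq hσ))
  have hred := h.redirectsUnheld (prio := prio) (q := q) hσ
  by_cases hheld : i₀ ∈ daHeld R' prio q σ s₀
  swap
  · have hrej : IsRejected prio q R' σ i₀ := ⟨s₀, h.daTarget_self hσ, hheld⟩
    exact Or.inl (GS_eq_of_daTarget_eq hprio hR hR' hterm hreach
      (hreach'.tail ⟨i₀, hrej, rfl⟩) (h.daTarget_update_self hσ))
  set σ' := (daStep R' prio q)^[Fintype.card I * Fintype.card S + 1] σ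
  have hrun : ReflTransGen (DAMove prio q R') σ σ' := reflTransGen_iterate hprio _
  have hterm' : IsTerminal prio q R' σ' := isTerminal_iterate hprio hR' hreach'
  rw [GS_eq_heldMatching hprio hR hterm hreach,
    GS_eq_heldMatching hprio hR' hterm' (hreach'.trans hrun)]
  refine Or.inr ⟨heldMatching_eq_none_of_daTarget (daTarget_eq_none_iff.2 hσ.ge),
    (claims_heldMatching_iff hprio).2 (admits_of_mem_daHeld_of_redirectsUnheld hprio hred hheld),
    fun s x => claims_heldMatching_of_reflTransGen hprio hred hrun,
    fun j hj hν => heldMatching_eq_none_of_daTarget ?_,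
    ncard_heldMatching_eq_none_le hprio hred hrun⟩
  rw [heldMatching_eq_none_iff hterm, daTarget_eq_none_iff] at hν
  rw [daTarget_eq_none_iff, h.1 j hj]
  exact hν.trans (le_of_reflTransGen hrun j)

end AppendsSchool

end Extension

section Monotonicity

variable {I S : Type*} [Fintype I] [DecidableEq I] [Fintype S] [DecidableEq S]
  {prio : S → List I} {q : S → ℕ}

theorem GS_congr {R R' : I → List (Option S)} (h : ∀ i, acceptables (R' i) = acceptables (R i)) :
    GS R' prio q = GS R prio q := by
  have htgt : ∀ σ, daTarget R' σ = daTarget R σ := fun _ => daTarget_congr h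
  have hstep : daStep R' prio q = daStep R prio q := by
    funext σ i
    simp only [daStep, htgt, daHeld_congr (htgt σ)]
  change heldMatching prio q R' _ = heldMatching prio q R _
  rw [hstep, heldMatching_congr (htgt _)]

theorem numBlocking_GS_truncate_update_le (hprio : ∀ s, ValidPrio (prio s))
    {P : I → List (Option S)} (hP : ∀ i, ValidPref (P i)) (c : I → ℕ) (i₀ : I) :
    numBlocking P prio q
        (GS (fun i => truncate (P i) (Function.update c i₀ (c i₀ + 1) i)) prio q) ≤
      numBlocking P prio q (GS (fun i => truncate (P i) (c i)) prio q) := by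
  set R : I → List (Option S) := fun i => truncate (P i) (c i)
  set R' : I → List (Option S) := fun i => truncate (P i) (Function.update c i₀ (c i₀ + 1) i)
  have hR : ∀ i, ValidPref (R i) := fun i => (hP i).truncate _
  have hR' : ∀ i, ValidPref (R' i) := fun i => (hP i).truncate _
  have hacc : ∀ j ≠ i₀, acceptables (R' j) = acceptables (R j) := fun j hj => by
    simp [R, R', acceptables_truncate, Function.update_of_ne hj]
  by_cases hlen : (acceptables (P i₀)).length ≤ c i₀
  · rw [GS_congr fun j => ?_]
    by_cases hj : j = i₀
    · subst hj
      simp [R, R', acceptables_truncate, List.take_of_length_le hlen,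
        List.take_of_length_le (hlen.trans (Nat.le_succ _))]
    · exact hacc j hj
  rw [not_le] at hlen
  have happ : AppendsSchool R R' i₀ (acceptables (P i₀))[c i₀] :=
    ⟨hacc, by simp only [R, R', acceptables_truncate, Function.update_self, List.take_add_one,
      List.getElem?_eq_getElem hlen, Option.toList_some]⟩
  rcases happ.GS_eq_or hprio hR hR' with heq | ⟨hν₀, hclaim₀, hclaims, hunmatched, hcard⟩
  · rw [heq]
  have hblock := fun x (hx : BlockingStudent P prio q (GS R' prio q) x) =>
    eq_none_of_isStable_truncate hP (isStable_GS hprio hR') hx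
  refine ncard_le_ncard_of_subset_of_sdiff_subset (U := {j | GS R prio q j = none})
    (U' := {j | GS R' prio q j = none}) hblock
    (fun x ⟨hx, hνx⟩ => blockingStudent_of_claims (hclaims · x) (hblock x hx) hνx hx)
    (fun x ⟨hνx, hμx⟩ => ?_) hcard
  obtain rfl : x = i₀ := by
    by_contra hx
    exact hμx (hunmatched x hx hνx)
  exact ⟨_, by rw [hν₀]; exact (hP x).prefLt_some_none_iff.2 (List.getElem_mem _), hclaim₀⟩

end Monotonicity

theorem numBlocking_monotone_in_truncations_general
    {I S : Type*} [Fintype I] [DecidableEq I] [Fintype S] [DecidableEq S]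
    (kv lv : I → ℕ) (hlk : ∀ i, lv i ≤ kv i)
    (P : I → List (Option S)) (prio : S → List I) (q : S → ℕ)
    (hP : ∀ i, ValidPref (P i)) (hprio : ∀ s, ValidPrio (prio s)) :
    numBlocking P prio q (GS (fun i => truncate (P i) (kv i)) prio q) ≤
      numBlocking P prio q (GS (fun i => truncate (P i) (lv i)) prio q) :=
  antitone_of_update_succ_le (f := fun c => numBlocking P prio q
    (GS (fun i => truncate (P i) (c i)) prio q))
    (fun c i => numBlocking_GS_truncate_update_le hprio hP c i) hlk

/-- Lemma 4: for individual constraint vectors with `kᵢ ≥ ℓᵢ > 1`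
for every student `i`, the deferred acceptance matching under the `ℓ`-truncations has at
least as many blocking students under `(P,≻,q)` as the one under the
`k`-truncations. -/
theorem numBlocking_monotone_in_truncations
    {I S : Type*} [Fintype I] [DecidableEq I] [Fintype S] [DecidableEq S]
    (hIS : Fintype.card S < Fintype.card I)
    (kv lv : I → ℕ) (hl : ∀ i, 1 < lv i) (hlk : ∀ i, lv i ≤ kv i)
    (P : I → List (Option S)) (prio : S → List I) (q : S → ℕ)
    (hP : ∀ i, ValidPref (P i)) (hprio : ∀ s, ValidPrio (prio s)) :
    numBlocking P prio q (GS (fun i => truncate (P i) (kv i)) prio q) ≤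
      numBlocking P prio q (GS (fun i => truncate (P i) (lv i)) prio q) :=
  numBlocking_monotone_in_truncations_general kv lv hlk P prio q hP hprio

end SchoolChoice
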